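/- arXiv:2101.02443 — 3 statements merged into one kernel-verified Lean document; each statement's English description precedes it below -/
import Mathlib

section
/- For any quaternion matrix X ∈ ℍ^{M×N} with quaternion singular value decomposition X = U D V^H (D real diagonal with nonnegative entries σ₁ ≥ ⋯ ≥ σ_{min(M,N)}), and any quaternion matrices A ∈ ℍ^{r×M}, B ∈ ℍ^{r×N} with A A^H = I_r and B B^H = I_r, the modulus of the trace satisfies |tr(A X B^H)| ≤ ∑_{i=1}^r σ_i(X). -/
/-!
Replacing `A, B` by `P = A U` and `Q = B V`, which still have orthonormal rows, the trace becomes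
`∑ₙ σₙ ∑ₖ P k n * conj (Q k n)`, so its modulus is at most `∑ₙ σₙ cₙ` with
`cₙ = ∑ₖ |P k n| |Q k n|`. The columns of a matrix with orthonormal rows have norm at most one and
its `r` rows have norm one, so `0 ≤ cₙ ≤ 1` and `∑ₙ cₙ ≤ r`. Against a decreasing nonnegative `σ`,
such weights gain most by putting weight one on the first `r` indices.
-/

open Matrix Finset Function
open scoped Quaternion

namespace Quaternion

lemma coe_sum {ι : Type*} (s : Finset ι) (f : ι → ℝ) :
    ((∑ i ∈ s, f i : ℝ) : ℍ) = ∑ i ∈ s, (f i : ℍ) :=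
  map_sum (algebraMap ℝ ℍ) f s

lemma self_mul_star_eq_norm_sq (a : ℍ) : a * star a = ((‖a‖ ^ 2 : ℝ) : ℍ) := by
  rw [self_mul_star, normSq_eq_norm_mul_self, sq]

lemma star_mul_self_eq_norm_sq (a : ℍ) : star a * a = ((‖a‖ ^ 2 : ℝ) : ℍ) := by
  rw [star_mul_self, normSq_eq_norm_mul_self, sq]

end Quaternion

lemma sum_mul_le_one_of_sum_sq_le_one {ι : Type*} (s : Finset ι) {f g : ι → ℝ}
    (hf : ∑ i ∈ s, f i ^ 2 ≤ 1) (hg : ∑ i ∈ s, g i ^ 2 ≤ 1) : ∑ i ∈ s, f i * g i ≤ 1 := by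
  have amgm : ∀ i, f i * g i ≤ (f i ^ 2 + g i ^ 2) / 2 := fun i => by
    nlinarith [sq_nonneg (f i - g i)]
  calc ∑ i ∈ s, f i * g i ≤ ∑ i ∈ s, (f i ^ 2 + g i ^ 2) / 2 := sum_le_sum fun i _ => amgm i
    _ = (∑ i ∈ s, f i ^ 2 + ∑ i ∈ s, g i ^ 2) / 2 := by rw [← sum_add_distrib, sum_div]
    _ ≤ 1 := by linarith

lemma sum_comp_le_sum_of_injective {ι κ : Type*} [Fintype ι] [Fintype κ] {e : ι → κ}
    (he : Injective e) {f : κ → ℝ} (hf : ∀ x, 0 ≤ f x) : ∑ i, f (e i) ≤ ∑ x, f x :=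
  (sum_map univ ⟨e, he⟩ f).symm.trans_le (sum_le_univ_sum_of_nonneg hf)

/-- Compare with `σ r`: weights at indices below `r` gain at most `σ n - σ r` each, the others
lose, and the total weight contributes at most `r σ r`. -/
theorem sum_mul_le_sum_range_of_antitone {ι : Type*} [Fintype ι] {idx : ι → ℕ}
    (hidx : Injective idx) {σ : ℕ → ℝ} (hσ : Antitone σ) {r : ℕ} (hσr : 0 ≤ σ r)
    {c : ι → ℝ} (hc0 : ∀ i, 0 ≤ c i) (hc1 : ∀ i, c i ≤ 1) (hsum : ∑ i, c i ≤ r) :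
    ∑ i, σ (idx i) * c i ≤ ∑ n ∈ range r, σ n := by
  have pointwise : ∀ i,
      (σ (idx i) - σ r) * c i ≤ if idx i < r then σ (idx i) - σ r else 0 := by
    intro i
    split_ifs with h
    · exact mul_le_of_le_one_right (sub_nonneg.2 (hσ h.le)) (hc1 i)
    · exact mul_nonpos_of_nonpos_of_nonneg (sub_nonpos.2 (hσ (not_lt.1 h))) (hc0 i)
  have below : ∑ i ∈ univ.filter (fun i => idx i < r), (σ (idx i) - σ r)
      ≤ ∑ n ∈ range r, (σ n - σ r) := by
    rw [← sum_image (f := fun n => σ n - σ r) hidx.injOn]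
    refine sum_le_sum_of_subset_of_nonneg ?_ fun n hn _ => sub_nonneg.2 (hσ (mem_range.1 hn).le)
    intro n hn
    obtain ⟨i, hi, rfl⟩ := mem_image.1 hn
    exact mem_range.2 (mem_filter.1 hi).2
  calc ∑ i, σ (idx i) * c i = ∑ i, (σ (idx i) - σ r) * c i + σ r * ∑ i, c i := by
        rw [mul_sum, ← sum_add_distrib]
        exact sum_congr rfl fun i _ => by ring
    _ ≤ ∑ n ∈ range r, (σ n - σ r) + σ r * r := by
        refine add_le_add ?_ (mul_le_mul_of_nonneg_left hsum hσr)
        calc _ ≤ ∑ i, if idx i < r then σ (idx i) - σ r else 0 :=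
              sum_le_sum fun i _ => pointwise i
          _ = _ := (sum_filter _ _).symm
          _ ≤ _ := below
    _ = ∑ n ∈ range r, σ n := by
        rw [sum_sub_distrib, sum_const, card_range, nsmul_eq_mul]
        ring

namespace Matrix

section Orthonormal

variable {m n : Type*}

lemma mul_conjTranspose_apply_self [Fintype n] (P : Matrix m n ℍ) (k : m) :
    (P * Pᴴ) k k = ((∑ j, ‖P k j‖ ^ 2 : ℝ) : ℍ) := by
  simp only [mul_apply, conjTranspose_apply, Quaternion.self_mul_star_eq_norm_sq,
    Quaternion.coe_sum]

lemma conjTranspose_mul_apply_self [Fintype m] (P : Matrix m n ℍ) (j : n) :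
    (Pᴴ * P) j j = ((∑ k, ‖P k j‖ ^ 2 : ℝ) : ℍ) := by
  simp only [mul_apply, conjTranspose_apply, Quaternion.star_mul_self_eq_norm_sq,
    Quaternion.coe_sum]

variable [DecidableEq m] {P : Matrix m n ℍ}

lemma sum_norm_sq_row_eq_one [Fintype n] (hP : P * Pᴴ = 1) (k : m) : ∑ j, ‖P k j‖ ^ 2 = 1 := by
  have h := mul_conjTranspose_apply_self P k
  rw [hP, one_apply_eq] at h
  exact Quaternion.coe_injective h.symm

/-- `G = Pᴴ P` satisfies `Gᴴ G = G`, so `d = G j j = ∑ᵢ ‖G i j‖² ≥ d²`. -/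
lemma sum_norm_sq_col_le_one [Fintype m] [Fintype n] (hP : P * Pᴴ = 1) (j : n) :
    ∑ k, ‖P k j‖ ^ 2 ≤ 1 := by
  set G := Pᴴ * P
  have hG : Gᴴ * G = G := by
    rw [conjTranspose_mul, conjTranspose_conjTranspose, Matrix.mul_assoc,
      ← Matrix.mul_assoc P, hP, Matrix.one_mul]
  set d := ∑ k, ‖P k j‖ ^ 2
  have hd : G j j = d := conjTranspose_mul_apply_self P j
  have hd_sq : d ^ 2 ≤ d := by
    have h := conjTranspose_mul_apply_self G j
    rw [hG, hd] at h
    calc d ^ 2 = ‖G j j‖ ^ 2 := by rw [hd, Quaternion.norm_coe, Real.norm_eq_abs, sq_abs]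
      _ ≤ ∑ i, ‖G i j‖ ^ 2 := single_le_sum (fun i _ => sq_nonneg ‖G i j‖) (mem_univ j)
      _ = d := (Quaternion.coe_injective h).symm
  nlinarith

end Orthonormal

lemma mul_mul_conjTranspose_eq_one {l m α : Type*} [Fintype l] [Fintype m] [DecidableEq l]
    [DecidableEq m] [Semiring α] [StarRing α] {A : Matrix l m α} {U : Matrix m m α}
    (hA : A * Aᴴ = 1) (hU : U * Uᴴ = 1) : A * U * (A * U)ᴴ = 1 := by
  rw [conjTranspose_mul, Matrix.mul_assoc, ← Matrix.mul_assoc U, hU, Matrix.one_mul, hA]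

lemma norm_trace_mul_mul_conjTranspose_le {l m n : Type*} [Fintype l] [Fintype m] [Fintype n]
    (P : Matrix l m ℍ) (D : Matrix m n ℍ) (Q : Matrix l n ℍ) :
    ‖(P * D * Qᴴ).trace‖ ≤ ∑ i, ∑ j, ‖D i j‖ * ∑ k, ‖P k i‖ * ‖Q k j‖ := by
  calc ‖(P * D * Qᴴ).trace‖ = ‖∑ k, ∑ i, ∑ j, P k i * D i j * star (Q k j)‖ := by
        simp only [trace, diag_apply, mul_apply, conjTranspose_apply, sum_mul]
        rw [sum_congr rfl fun k _ => sum_comm]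
    _ ≤ ∑ k, ∑ i, ∑ j, ‖P k i‖ * ‖D i j‖ * ‖Q k j‖ := by
        refine (norm_sum_le _ _).trans (sum_le_sum fun k _ => ?_)
        refine (norm_sum_le _ _).trans (sum_le_sum fun i _ => ?_)
        refine (norm_sum_le _ _).trans_eq (sum_congr rfl fun j _ => ?_)
        rw [norm_mul, norm_mul, norm_star]
    _ = ∑ i, ∑ j, ‖D i j‖ * ∑ k, ‖P k i‖ * ‖Q k j‖ := by
        rw [sum_comm]
        refine sum_congr rfl fun i _ => ?_
        rw [sum_comm]
        simp only [mul_sum]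
        exact sum_congr rfl fun j _ => sum_congr rfl fun k _ => by ring

noncomputable def rectDiagonal (M N : ℕ) (σ : ℕ → ℝ) : Matrix (Fin M) (Fin N) ℍ :=
  Matrix.of fun i j => if (i : ℕ) = j then (σ i : ℍ) else 0

abbrev DiagIndex (M N : ℕ) := {p : Fin M × Fin N // (p.1 : ℕ) = p.2}

lemma DiagIndex.fst_injective {M N : ℕ} : Injective fun p : DiagIndex M N => p.1.1 :=
  fun p q (h : p.1.1 = q.1.1) =>
    Subtype.ext (Prod.ext h (Fin.ext (by rw [← p.2, ← q.2, h])))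

lemma DiagIndex.snd_injective {M N : ℕ} : Injective fun p : DiagIndex M N => p.1.2 :=
  fun p q (h : p.1.2 = q.1.2) =>
    Subtype.ext (Prod.ext (Fin.ext (by rw [p.2, q.2, h])) h)

lemma sum_norm_rectDiagonal_mul {M N : ℕ} {σ : ℕ → ℝ} (hσ : ∀ n, 0 ≤ σ n)
    (w : Fin M → Fin N → ℝ) :
    ∑ i, ∑ j, ‖rectDiagonal M N σ i j‖ * w i j
      = ∑ p : DiagIndex M N, σ p.1.1 * w p.1.1 p.1.2 := by
  have entry : ∀ i j, ‖rectDiagonal M N σ i j‖ * w i j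
      = if (i : ℕ) = j then σ i * w i j else 0 := fun i j => by
    by_cases h : (i : ℕ) = j <;>
      simp [rectDiagonal, h, Real.norm_eq_abs, abs_of_nonneg (hσ _)]
  simp only [entry]
  rw [← Fintype.sum_prod_type', ← sum_filter]
  exact sum_subtype _ (fun p => by simp) fun p : Fin M × Fin N => σ p.1 * w p.1 p.2

theorem norm_trace_mul_rectDiagonal_mul_le {ι : Type*} [Fintype ι] [DecidableEq ι] {M N : ℕ}
    {P : Matrix ι (Fin M) ℍ} {Q : Matrix ι (Fin N) ℍ} (hP : P * Pᴴ = 1) (hQ : Q * Qᴴ = 1)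
    {σ : ℕ → ℝ} (hσ : Antitone σ) (hσ0 : ∀ n, 0 ≤ σ n) :
    ‖(P * rectDiagonal M N σ * Qᴴ).trace‖ ≤ ∑ n ∈ range (Fintype.card ι), σ n := by
  set c : DiagIndex M N → ℝ := fun p => ∑ k, ‖P k p.1.1‖ * ‖Q k p.1.2‖
  have hc0 : ∀ p, 0 ≤ c p := fun p => sum_nonneg fun k _ => by positivity
  have hc1 : ∀ p, c p ≤ 1 := fun p => sum_mul_le_one_of_sum_sq_le_one univ
    (sum_norm_sq_col_le_one hP p.1.1) (sum_norm_sq_col_le_one hQ p.1.2)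
  have row_le_one : ∀ k, ∑ p : DiagIndex M N, ‖P k p.1.1‖ * ‖Q k p.1.2‖ ≤ 1 := fun k =>
    sum_mul_le_one_of_sum_sq_le_one univ
      ((sum_comp_le_sum_of_injective DiagIndex.fst_injective fun _ => sq_nonneg _).trans_eq
        (sum_norm_sq_row_eq_one hP k))
      ((sum_comp_le_sum_of_injective DiagIndex.snd_injective fun _ => sq_nonneg _).trans_eq
        (sum_norm_sq_row_eq_one hQ k))
  have hsum : ∑ p, c p ≤ Fintype.card ι := by
    rw [sum_comm]
    simpa using sum_le_sum fun k (_ : k ∈ univ) => row_le_one k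
  calc ‖(P * rectDiagonal M N σ * Qᴴ).trace‖
      ≤ ∑ i, ∑ j, ‖rectDiagonal M N σ i j‖ * ∑ k, ‖P k i‖ * ‖Q k j‖ :=
        norm_trace_mul_mul_conjTranspose_le P _ Q
    _ = ∑ p, σ p.1.1 * c p := sum_norm_rectDiagonal_mul hσ0 _
    _ ≤ _ := sum_mul_le_sum_range_of_antitone (Fin.val_injective.comp DiagIndex.fst_injective)
        hσ (hσ0 _) hc0 hc1 hsum

end Matrix

theorem quat_trace_inequality_general {M N r : ℕ}
    (X : Matrix (Fin M) (Fin N) (Quaternion ℝ))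
    (U : Matrix (Fin M) (Fin M) (Quaternion ℝ))
    (V : Matrix (Fin N) (Fin N) (Quaternion ℝ))
    (hU1 : U * Uᴴ = 1)
    (hV1 : V * Vᴴ = 1)
    (σ : ℕ → ℝ) (hσnonneg : ∀ i, 0 ≤ σ i)
    (hσanti : ∀ i j : ℕ, i ≤ j → σ j ≤ σ i)
    (hX : X = U * (Matrix.of fun (i : Fin M) (j : Fin N) =>
      if (i : ℕ) = (j : ℕ) then ((σ (i : ℕ) : ℝ) : Quaternion ℝ) else 0) * Vᴴ)
    (A : Matrix (Fin r) (Fin M) (Quaternion ℝ))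
    (B : Matrix (Fin r) (Fin N) (Quaternion ℝ))
    (hA : A * Aᴴ = 1) (hB : B * Bᴴ = 1) :
    ‖Matrix.trace (A * X * Bᴴ)‖ ≤ ∑ i ∈ Finset.range r, σ i := by
  have hX' : A * X * Bᴴ = A * U * rectDiagonal M N σ * (B * V)ᴴ := by
    rw [hX, conjTranspose_mul]
    simp only [Matrix.mul_assoc]
    rfl
  rw [hX']
  simpa using norm_trace_mul_rectDiagonal_mul_le (mul_mul_conjTranspose_eq_one hA hU1)
    (mul_mul_conjTranspose_eq_one hB hV1) (fun i j => hσanti i j) hσnonneg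

theorem quat_trace_inequality {M N r : ℕ} (hr : r ≤ min M N)
    (X : Matrix (Fin M) (Fin N) (Quaternion ℝ))
    (U : Matrix (Fin M) (Fin M) (Quaternion ℝ))
    (V : Matrix (Fin N) (Fin N) (Quaternion ℝ))
    (hU1 : U * Uᴴ = 1) (hU2 : Uᴴ * U = 1)
    (hV1 : V * Vᴴ = 1) (hV2 : Vᴴ * V = 1)
    (σ : ℕ → ℝ) (hσnonneg : ∀ i, 0 ≤ σ i)
    (hσanti : ∀ i j : ℕ, i ≤ j → σ j ≤ σ i)
    (hX : X = U * (Matrix.of fun (i : Fin M) (j : Fin N) =>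
      if (i : ℕ) = (j : ℕ) then ((σ (i : ℕ) : ℝ) : Quaternion ℝ) else 0) * Vᴴ)
    (A : Matrix (Fin r) (Fin M) (Quaternion ℝ))
    (B : Matrix (Fin r) (Fin N) (Quaternion ℝ))
    (hA : A * Aᴴ = 1) (hB : B * Bᴴ = 1) :
    ‖Matrix.trace (A * X * Bᴴ)‖ ≤ ∑ i ∈ Finset.range r, σ i :=
  quat_trace_inequality_general X U V hU1 hV1 σ hσnonneg hσanti hX A B hA hB
end

section
/- With notation as in the quaternion trace inequality, the bound is attained: if A = [I_r, 0] U^H and B = [I_r, 0] V^H where X = U Σ V^H is a QSVD of X, then A A^H = I_r, B B^H = I_r, and |tr(A X B^H)| = ∑_{i=1}^r σ_i(X). Consequently max over all such (A,B) of |tr(A X B^H)| equals ∑_{i=1}^r σ_i(X). -/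
/-!
Write `E = [I_r, 0]` and `D = Σ`. Since `U` and `V` are unitary, `A ↦ A U` and `B ↦ B V` preserve
row-orthonormality, so it suffices to bound `|tr(P D Qᴴ)|` over row-orthonormal `P`, `Q`; for
`P = Q = E` the trace is exactly `σ₁ + ⋯ + σᵣ`. The trace equals `∑ₜ σₜ ∑ᵢ Pᵢₜ conj(Qᵢₜ)`, and
`|p conj(q)| ≤ (|p|² + |q|²) / 2`, so it is at most `∑ₜ σₜ γₜ` with `γₜ` the mean of the squared
norms of the `t`-th columns of `P` and `Q`. These weights lie in `[0, 1]` and sum to at most `r`,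
and against a decreasing `σ ≥ 0` such weights do best when they sit on the first `r` terms.
-/

open Matrix Finset
open scoped Quaternion

namespace Matrix

variable {α ι : Type*}

/-- `rectDiag 1` is `[I_m, 0]` and `rectDiag σ` is the `Σ` of an SVD. -/
def rectDiag {m n : ℕ} [Zero α] (d : ℕ → α) : Matrix (Fin m) (Fin n) α :=
  of fun i j => if (i : ℕ) = j then d i else 0

/-- Columns are indexed by `ℕ` so that matrices of different widths can be compared column by
column. -/
def padCols {n : ℕ} [Zero α] (P : Matrix ι (Fin n) α) (i : ι) (t : ℕ) : α :=
  if h : t < n then P i ⟨t, h⟩ else 0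

@[simp]
lemma padCols_fin {n : ℕ} [Zero α] (P : Matrix ι (Fin n) α) (i : ι) (k : Fin n) :
    padCols P i k = P i k := by
  simp [padCols]

lemma padCols_of_le {n : ℕ} [Zero α] (P : Matrix ι (Fin n) α) (i : ι) {t : ℕ} (ht : n ≤ t) :
    padCols P i t = 0 := by
  simp [padCols, not_lt.mpr ht]

lemma padCols_rectDiag {m n : ℕ} [Zero α] (h : m ≤ n) (d : ℕ → α) (i : Fin m) (t : ℕ) :
    padCols (rectDiag d : Matrix (Fin m) (Fin n) α) i t = if (i : ℕ) = t then d i else 0 := by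
  unfold padCols rectDiag
  split_ifs <;> simp_all
  omega

lemma mul_rectDiag_apply {m n : ℕ} [NonUnitalNonAssocSemiring α]
    (P : Matrix ι (Fin m) α) (d : ℕ → α) (i : ι) (k : Fin n) :
    (P * (rectDiag d : Matrix (Fin m) (Fin n) α)) i k = padCols P i k * d k := by
  calc (P * (rectDiag d : Matrix (Fin m) (Fin n) α)) i k
      = ∑ t ∈ range m, padCols P i t * if t = k then d t else 0 := by
        rw [mul_apply, ← Fin.sum_univ_eq_sum_range]
        simp [rectDiag]
    _ = padCols P i k * d k := by
        simp only [mul_ite, mul_zero, sum_ite_eq', mem_range]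
        split_ifs with hk
        · rfl
        · rw [padCols_of_le P i (not_lt.mp hk), zero_mul]

lemma rectDiag_mul_rectDiag {l m n : ℕ} [NonUnitalNonAssocSemiring α] (h : l ≤ m)
    (d e : ℕ → α) :
    (rectDiag d : Matrix (Fin l) (Fin m) α) * (rectDiag e : Matrix (Fin m) (Fin n) α) =
      rectDiag (d * e) := by
  ext i k
  rw [mul_rectDiag_apply, padCols_rectDiag h]
  simp +contextual [rectDiag]

lemma conjTranspose_rectDiag {m n : ℕ} [AddMonoid α] [StarAddMonoid α] (d : ℕ → α) :
    (rectDiag d : Matrix (Fin m) (Fin n) α)ᴴ = rectDiag (star d) := by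
  ext i j
  simp only [rectDiag, conjTranspose_apply, of_apply, apply_ite star, star_zero, eq_comm,
    Pi.star_apply]
  split_ifs with h <;> simp [h]

lemma rectDiag_eq_diagonal {n : ℕ} [Zero α] (d : ℕ → α) :
    (rectDiag d : Matrix (Fin n) (Fin n) α) = diagonal fun i : Fin n => d i := by
  ext i j
  simp [rectDiag, diagonal, Fin.ext_iff]

lemma rectDiag_one_mul_conjTranspose_self {m n : ℕ} [Semiring α] [StarRing α] (h : m ≤ n) :
    (rectDiag 1 : Matrix (Fin m) (Fin n) α) * (rectDiag 1 : Matrix (Fin m) (Fin n) α)ᴴ = 1 := by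
  rw [conjTranspose_rectDiag, rectDiag_mul_rectDiag h, rectDiag_eq_diagonal]
  simp

lemma trace_rectDiag_one_mul_rectDiag_mul_conjTranspose {r m n : ℕ} [Semiring α] [StarRing α]
    (hm : r ≤ m) (hn : r ≤ n) (d : ℕ → α) :
    trace ((rectDiag 1 : Matrix (Fin r) (Fin m) α) * (rectDiag d : Matrix (Fin m) (Fin n) α) *
      (rectDiag 1 : Matrix (Fin r) (Fin n) α)ᴴ) = ∑ t ∈ range r, d t := by
  rw [conjTranspose_rectDiag, rectDiag_mul_rectDiag hm, rectDiag_mul_rectDiag hn,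
    rectDiag_eq_diagonal, trace_diagonal, ← Fin.sum_univ_eq_sum_range]
  simp

lemma trace_mul_rectDiag_mul_conjTranspose {m n : ℕ} [Fintype ι] [NonUnitalSemiring α] [Star α]
    (P : Matrix ι (Fin m) α) (d : ℕ → α) (Q : Matrix ι (Fin n) α) :
    trace (P * (rectDiag d : Matrix (Fin m) (Fin n) α) * Qᴴ) =
      ∑ t ∈ range n, ∑ i, padCols P i t * d t * star (padCols Q i t) := by
  rw [← Fin.sum_univ_eq_sum_range (fun t => ∑ i, padCols P i t * d t * star (padCols Q i t)),
    sum_comm]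
  simp [trace, mul_apply (N := Qᴴ), mul_rectDiag_apply]

lemma mul_mul_conjTranspose_of_mul_conjTranspose_eq_one {m n : ℕ} [Semiring α] [StarRing α]
    {W : Matrix (Fin n) (Fin n) α} (hW : W * Wᴴ = 1) (S : Matrix (Fin m) (Fin n) α) :
    S * W * (S * W)ᴴ = S * Sᴴ := by
  rw [conjTranspose_mul, Matrix.mul_assoc, ← Matrix.mul_assoc W, hW, Matrix.one_mul]

end Matrix

lemma sum_range_mul_le_sum_range_of_antitone {σ c : ℕ → ℝ} {r m : ℕ} (hrm : r ≤ m)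
    (hσ : Antitone σ) (hσr : 0 ≤ σ r) (hc : ∀ t, 0 ≤ c t ∧ c t ≤ 1)
    (hcs : ∑ t ∈ range m, c t ≤ r) :
    ∑ t ∈ range m, σ t * c t ≤ ∑ t ∈ range r, σ t := by
  have hpoint : ∀ t,
      σ t * c t ≤ (if t < r then σ t else 0) + σ r * (c t - if t < r then 1 else 0) := by
    intro t
    split_ifs with ht
    · nlinarith [hσ ht.le, hc t]
    · nlinarith [hσ (not_lt.mp ht), hc t]
  have htrunc : ∀ f : ℕ → ℝ,
      ∑ t ∈ range m, (if t < r then f t else 0) = ∑ t ∈ range r, f t := by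
    intro f
    rw [← sum_filter]
    congr 1
    ext t
    simp only [mem_filter, mem_range]
    omega
  calc ∑ t ∈ range m, σ t * c t
      ≤ ∑ t ∈ range m, ((if t < r then σ t else 0) + σ r * (c t - if t < r then 1 else 0)) :=
        sum_le_sum fun t _ => hpoint t
    _ = ∑ t ∈ range r, σ t + σ r * (∑ t ∈ range m, c t - r) := by
        rw [sum_add_distrib, ← mul_sum, sum_sub_distrib, htrunc σ, htrunc fun _ => 1]
        simp
    _ ≤ ∑ t ∈ range r, σ t := by nlinarith

lemma Quaternion.coe_sum_s5 {ι : Type*} (s : Finset ι) (f : ι → ℝ) :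
    ((∑ i ∈ s, f i : ℝ) : ℍ) = ∑ i ∈ s, (f i : ℍ) :=
  map_sum (algebraMap ℝ ℍ) f s

lemma Quaternion.norm_mul_coe_mul_star_le (p q : ℍ) {s : ℝ} (hs : 0 ≤ s) :
    ‖p * (s : ℍ) * star q‖ ≤ s * ((normSq p + normSq q) / 2) := by
  rw [norm_mul, norm_mul, norm_star, norm_coe, Real.norm_of_nonneg hs, normSq_eq_norm_mul_self,
    normSq_eq_norm_mul_self]
  nlinarith [sq_nonneg (‖p‖ - ‖q‖)]

namespace Matrix

open Quaternion

variable {ι κ : Type*}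

lemma mul_conjTranspose_self_apply_self [Fintype κ] (P : Matrix ι κ ℍ) (i : ι) :
    (P * Pᴴ) i i = ((∑ j, normSq (P i j) : ℝ) : ℍ) := by
  simp only [mul_apply, conjTranspose_apply, self_mul_star, coe_sum_s5]

lemma sum_normSq_row_eq_one [Fintype κ] [DecidableEq ι] {P : Matrix ι κ ℍ} (hP : P * Pᴴ = 1)
    (i : ι) : ∑ j, normSq (P i j) = 1 :=
  coe_injective <| by
    rw [← mul_conjTranspose_self_apply_self, hP, one_apply_eq, Quaternion.coe_one]

/-- `G = Pᴴ P` is a Hermitian idempotent, so `G k k = α` gives `α = ∑ⱼ |G k j|² ≥ α²`. -/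
lemma sum_normSq_col_le_one [Fintype ι] [Fintype κ] [DecidableEq ι] {P : Matrix ι κ ℍ}
    (hP : P * Pᴴ = 1) (k : κ) : ∑ i, normSq (P i k) ≤ 1 := by
  set G := Pᴴ * P
  have hG : G * Gᴴ = G := by
    rw [conjTranspose_mul, conjTranspose_conjTranspose, Matrix.mul_assoc, ← Matrix.mul_assoc P, hP,
      Matrix.one_mul]
  have hGkk : G k k = ((∑ i, normSq (P i k) : ℝ) : ℍ) := by
    simpa using mul_conjTranspose_self_apply_self Pᴴ k
  have hsum : ∑ i, normSq (P i k) = ∑ j, normSq (G k j) :=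
    coe_injective <| by rw [← hGkk, ← mul_conjTranspose_self_apply_self, hG]
  have hsq : (∑ i, normSq (P i k)) ^ 2 ≤ ∑ i, normSq (P i k) := by
    calc (∑ i, normSq (P i k)) ^ 2 = normSq (G k k) := by rw [hGkk, normSq_coe]
      _ ≤ ∑ j, normSq (G k j) := single_le_sum (fun j _ => normSq_nonneg) (mem_univ k)
      _ = _ := hsum.symm
  nlinarith [sum_nonneg fun i (_ : i ∈ univ) => normSq_nonneg (a := P i k)]

noncomputable def colNormSq [Fintype ι] {n : ℕ} (P : Matrix ι (Fin n) ℍ) (t : ℕ) : ℝ :=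
  ∑ i, normSq (padCols P i t)

lemma colNormSq_nonneg [Fintype ι] {n : ℕ} (P : Matrix ι (Fin n) ℍ) (t : ℕ) :
    0 ≤ colNormSq P t :=
  sum_nonneg fun _ _ => normSq_nonneg

lemma colNormSq_le_one [Fintype ι] [DecidableEq ι] {n : ℕ} {P : Matrix ι (Fin n) ℍ}
    (hP : P * Pᴴ = 1) (t : ℕ) : colNormSq P t ≤ 1 := by
  by_cases ht : t < n
  · simpa [colNormSq, padCols, ht] using sum_normSq_col_le_one hP ⟨t, ht⟩
  · simp [colNormSq, padCols_of_le P _ (not_lt.mp ht)]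

lemma sum_range_colNormSq_le [Fintype ι] [DecidableEq ι] {n : ℕ} {P : Matrix ι (Fin n) ℍ}
    (hP : P * Pᴴ = 1) (l : ℕ) : ∑ t ∈ range l, colNormSq P t ≤ Fintype.card ι := by
  calc ∑ t ∈ range l, colNormSq P t
      ≤ ∑ t ∈ range (max l n), colNormSq P t :=
        sum_le_sum_of_subset_of_nonneg (range_subset_range.mpr (le_max_left l n))
          fun t _ _ => colNormSq_nonneg P t
    _ = ∑ t ∈ range n, colNormSq P t := by
        refine (sum_subset (range_subset_range.mpr (le_max_right l n)) fun t _ ht => ?_).symm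
        simp [colNormSq, padCols_of_le P _ (not_lt.mp (mem_range.not.mp ht))]
    _ = ∑ i, ∑ k, normSq (P i k) := by
        rw [← Fin.sum_univ_eq_sum_range, sum_comm]
        simp [colNormSq]
    _ = Fintype.card ι := by simp [sum_normSq_row_eq_one hP]

theorem norm_trace_mul_rectDiag_mul_conjTranspose_le {r m n : ℕ} (hrn : r ≤ n)
    {σ : ℕ → ℝ} (hσ : Antitone σ) (hσ0 : ∀ t, 0 ≤ σ t)
    {P : Matrix (Fin r) (Fin m) ℍ} {Q : Matrix (Fin r) (Fin n) ℍ}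
    (hP : P * Pᴴ = 1) (hQ : Q * Qᴴ = 1) :
    ‖trace (P * (rectDiag (fun t => (σ t : ℍ)) : Matrix (Fin m) (Fin n) ℍ) * Qᴴ)‖ ≤
      ∑ t ∈ range r, σ t := by
  set γ : ℕ → ℝ := fun t => (colNormSq P t + colNormSq Q t) / 2
  have hγ : ∀ t, 0 ≤ γ t ∧ γ t ≤ 1 := fun t => by
    constructor <;> simp only [γ] <;>
      linarith [colNormSq_nonneg P t, colNormSq_nonneg Q t, colNormSq_le_one hP t,
        colNormSq_le_one hQ t]
  have hγsum : ∑ t ∈ range n, γ t ≤ r := by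
    have hPsum := sum_range_colNormSq_le hP n
    have hQsum := sum_range_colNormSq_le hQ n
    simp only [γ, ← sum_div, sum_add_distrib, Fintype.card_fin] at *
    linarith
  rw [trace_mul_rectDiag_mul_conjTranspose]
  calc _ ≤ ∑ t ∈ range n, ∑ i, ‖padCols P i t * (σ t : ℍ) * star (padCols Q i t)‖ :=
        (norm_sum_le _ _).trans (sum_le_sum fun t _ => norm_sum_le _ _)
    _ ≤ ∑ t ∈ range n, σ t * γ t := sum_le_sum fun t _ =>
        (sum_le_sum fun i _ => norm_mul_coe_mul_star_le _ _ (hσ0 t)).trans_eq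
          (by simp only [γ, colNormSq, ← mul_sum, ← sum_div, sum_add_distrib])
    _ ≤ ∑ t ∈ range r, σ t := sum_range_mul_le_sum_range_of_antitone hrn hσ (hσ0 r) hγ hγsum

end Matrix

theorem quat_trace_inequality_attained {M N r : ℕ} (hr : r ≤ min M N)
    (X : Matrix (Fin M) (Fin N) (Quaternion ℝ))
    (U : Matrix (Fin M) (Fin M) (Quaternion ℝ))
    (V : Matrix (Fin N) (Fin N) (Quaternion ℝ))
    (hU1 : U * Uᴴ = 1) (hU2 : Uᴴ * U = 1)
    (hV1 : V * Vᴴ = 1) (hV2 : Vᴴ * V = 1)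
    (σ : ℕ → ℝ) (hσnonneg : ∀ i, 0 ≤ σ i)
    (hσanti : ∀ i j : ℕ, i ≤ j → σ j ≤ σ i)
    (hX : X = U * (Matrix.of fun (i : Fin M) (j : Fin N) =>
      if (i : ℕ) = (j : ℕ) then ((σ (i : ℕ) : ℝ) : Quaternion ℝ) else 0) * Vᴴ)
    (A : Matrix (Fin r) (Fin M) (Quaternion ℝ))
    (B : Matrix (Fin r) (Fin N) (Quaternion ℝ))
    (hA : A = (Matrix.of fun (i : Fin r) (j : Fin M) =>
      if (i : ℕ) = (j : ℕ) then (1 : Quaternion ℝ) else 0) * Uᴴ)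
    (hB : B = (Matrix.of fun (i : Fin r) (j : Fin N) =>
      if (i : ℕ) = (j : ℕ) then (1 : Quaternion ℝ) else 0) * Vᴴ) :
    A * Aᴴ = 1 ∧ B * Bᴴ = 1 ∧
    ‖Matrix.trace (A * X * Bᴴ)‖ = ∑ i ∈ Finset.range r, σ i ∧
    IsGreatest {t : ℝ | ∃ (A' : Matrix (Fin r) (Fin M) (Quaternion ℝ))
        (B' : Matrix (Fin r) (Fin N) (Quaternion ℝ)),
        A' * A'ᴴ = 1 ∧ B' * B'ᴴ = 1 ∧ t = ‖Matrix.trace (A' * X * B'ᴴ)‖}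
      (∑ i ∈ Finset.range r, σ i) := by
  have hrM : r ≤ M := hr.trans (min_le_left M N)
  have hrN : r ≤ N := hr.trans (min_le_right M N)
  have hAU : A * U = rectDiag 1 := by rw [hA, Matrix.mul_assoc, hU2, Matrix.mul_one]; rfl
  have hBV : B * V = rectDiag 1 := by rw [hB, Matrix.mul_assoc, hV2, Matrix.mul_one]; rfl
  have hXUV : ∀ (A' : Matrix (Fin r) (Fin M) ℍ) (B' : Matrix (Fin r) (Fin N) ℍ),
      A' * X * B'ᴴ =
        A' * U * (rectDiag (fun t => (σ t : ℍ)) : Matrix (Fin M) (Fin N) ℍ) * (B' * V)ᴴ := by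
    intro A' B'
    rw [hX, conjTranspose_mul]
    simp only [Matrix.mul_assoc]
    rfl
  have hAA : A * Aᴴ = 1 := by
    rw [← mul_mul_conjTranspose_of_mul_conjTranspose_eq_one hU1, hAU,
      rectDiag_one_mul_conjTranspose_self hrM]
  have hBB : B * Bᴴ = 1 := by
    rw [← mul_mul_conjTranspose_of_mul_conjTranspose_eq_one hV1, hBV,
      rectDiag_one_mul_conjTranspose_self hrN]
  have hnorm : ‖trace (A * X * Bᴴ)‖ = ∑ t ∈ range r, σ t := by
    rw [hXUV, hAU, hBV, trace_rectDiag_one_mul_rectDiag_mul_conjTranspose hrM hrN,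
      ← Quaternion.coe_sum_s5, Quaternion.norm_coe,
      Real.norm_of_nonneg (sum_nonneg fun t _ => hσnonneg t)]
  refine ⟨hAA, hBB, hnorm, ⟨A, B, hAA, hBB, hnorm.symm⟩, ?_⟩
  rintro _ ⟨A', B', hA', hB', rfl⟩
  rw [hXUV]
  exact norm_trace_mul_rectDiag_mul_conjTranspose_le hrN hσanti hσnonneg
    (by rwa [mul_mul_conjTranspose_of_mul_conjTranspose_eq_one hU1])
    (by rwa [mul_mul_conjTranspose_of_mul_conjTranspose_eq_one hV1])
end

section
/- The truncated nuclear norm of a quaternion matrix equals the nuclear norm minus the maximum truncated trace: for X ∈ ℍ^{M×N} and 0 ≤ r ≤ min(M,N), ∑_{i=r+1}^{min(M,N)} σ_i(X) = ‖X‖_* − max{ |tr(C X D^H)| : C ∈ ℍ^{r×M}, D ∈ ℍ^{r×N}, C C^H = I_r, D D^H = I_r }. -/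
open Matrix Finset


lemma qsum_lemma {r m : ℕ} (hrm : r ≤ m) (σ c : ℕ → ℝ)
    (hσ0 : ∀ i, 0 ≤ σ i) (hσa : ∀ i j : ℕ, i ≤ j → σ j ≤ σ i)
    (hc0 : ∀ t, 0 ≤ c t) (hc1 : ∀ t, c t ≤ 1)
    (hcs : ∑ t ∈ range m, c t ≤ (r : ℝ)) :
    ∑ t ∈ range m, σ t * c t ≤ ∑ t ∈ range r, σ t := by
  have hsplit := Finset.sum_range_add_sum_Ico (fun t => σ t * c t) hrm
  have hsplit2 := Finset.sum_range_add_sum_Ico c hrm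
  have S1 : ∑ t ∈ range r, σ t * c t
      ≤ ∑ t ∈ range r, σ t + σ r * (∑ t ∈ range r, c t - r) := by
    have h1 : ∑ t ∈ range r, σ t * c t
        ≤ ∑ t ∈ range r, (σ t + σ r * (c t - 1)) := by
      apply Finset.sum_le_sum
      intro t ht
      have htr : t ≤ r := le_of_lt (mem_range.mp ht)
      nlinarith [hσa t r htr, hc1 t, hc0 t, hσ0 t, hσ0 r]
    have h2 : ∑ t ∈ range r, (σ t + σ r * (c t - 1))
        = ∑ t ∈ range r, σ t + σ r * (∑ t ∈ range r, c t - r) := by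
      rw [Finset.sum_add_distrib, ← Finset.mul_sum, Finset.sum_sub_distrib,
        Finset.sum_const, Finset.card_range, nsmul_eq_mul, mul_one]
    linarith
  have S2 : ∑ t ∈ Ico r m, σ t * c t ≤ σ r * ∑ t ∈ Ico r m, c t := by
    rw [Finset.mul_sum]
    apply Finset.sum_le_sum
    intro t ht
    have := (Finset.mem_Ico.mp ht).1
    exact mul_le_mul_of_nonneg_right (hσa r t this) (hc0 t)
  have heq : σ r * (∑ t ∈ range r, c t - r) + σ r * ∑ t ∈ Ico r m, c t
      = σ r * (∑ t ∈ range m, c t - r) := by rw [← hsplit2]; ring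
  have hle : σ r * (∑ t ∈ range m, c t - r) ≤ 0 :=
    mul_nonpos_of_nonneg_of_nonpos (hσ0 r) (by linarith)
  linarith

lemma diag_pair_sum {M N : ℕ} {α : Type*} [AddCommMonoid α] (F : Fin M → Fin N → α) :
    ∑ k : Fin M, ∑ l : Fin N, (if (k : ℕ) = (l : ℕ) then F k l else 0)
    = ∑ t : Fin (min M N), F (Fin.castLE (min_le_left M N) t) (Fin.castLE (min_le_right M N) t) := by
  have h1 : (∑ k : Fin M, ∑ l : Fin N, if (k : ℕ) = (l : ℕ) then F k l else 0)
      = ∑ p ∈ Finset.univ.filter (fun p : Fin M × Fin N => (p.1 : ℕ) = (p.2 : ℕ)),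
          F p.1 p.2 := by
    rw [Finset.sum_filter]
    exact (Fintype.sum_prod_type (fun p : Fin M × Fin N => if (p.1 : ℕ) = (p.2 : ℕ) then F p.1 p.2 else 0)).symm
  rw [h1]
  apply Finset.sum_bij (i := fun p hp => (⟨(p.1 : ℕ),
      lt_min p.1.isLt (((Finset.mem_filter.mp hp).2) ▸ p.2.isLt)⟩ : Fin (min M N)))
  · intro a ha; exact Finset.mem_univ _
  · intro a ha b hb hab
    have h1 : (a.1 : ℕ) = (b.1 : ℕ) := by simpa using congrArg Fin.val hab
    have ha2 := (Finset.mem_filter.mp ha).2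
    have hb2 := (Finset.mem_filter.mp hb).2
    ext
    · exact h1
    · omega
  · intro t _
    refine ⟨(Fin.castLE (min_le_left M N) t, Fin.castLE (min_le_right M N) t), ?_, ?_⟩
    · simp [Finset.mem_filter]
    · ext; simp
  · intro p hp
    have hp2 := (Finset.mem_filter.mp hp).2
    congr 1 <;> ext <;> simp [hp2.symm]

lemma qcoe_sum {ι : Type*} (s : Finset ι) (f : ι → ℝ) :
    ((∑ i ∈ s, f i : ℝ) : Quaternion ℝ) = ∑ i ∈ s, ((f i : ℝ) : Quaternion ℝ) := by
  induction s using Finset.cons_induction with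
  | empty => simp
  | cons a s ha ih => rw [Finset.sum_cons, Finset.sum_cons, ← ih, Quaternion.coe_add]

lemma row_normSq_sum {r M : ℕ} (A : Matrix (Fin r) (Fin M) (Quaternion ℝ))
    (hA : A * Aᴴ = 1) (i : Fin r) :
    ∑ k : Fin M, Quaternion.normSq (A i k) = 1 := by
  have h := congrFun (congrFun hA i) i
  rw [Matrix.mul_apply] at h
  simp only [Matrix.conjTranspose_apply, Matrix.one_apply_eq] at h
  apply Quaternion.coe_injective
  rw [qcoe_sum]
  simp only [Quaternion.self_mul_star] at h
  simpa using h

lemma col_normSq_le_one {r M : ℕ} (A : Matrix (Fin r) (Fin M) (Quaternion ℝ))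
    (hA : A * Aᴴ = 1) (k : Fin M) :
    ∑ i : Fin r, Quaternion.normSq (A i k) ≤ 1 := by
  set P := Aᴴ * A with hP
  have hPP : P * P = P := by
    rw [hP, Matrix.mul_assoc, ← Matrix.mul_assoc A, hA, Matrix.one_mul]
  have hPH : Pᴴ = P := by
    rw [hP, Matrix.conjTranspose_mul, Matrix.conjTranspose_conjTranspose]
  set x := ∑ i : Fin r, Quaternion.normSq (A i k) with hx
  have hPkk : P k k = (x : Quaternion ℝ) := by
    rw [hP, Matrix.mul_apply, hx, qcoe_sum]
    apply Finset.sum_congr rfl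
    intro i _
    rw [Matrix.conjTranspose_apply, Quaternion.star_mul_self]
  have h2 : P k k = ((∑ j : Fin M, Quaternion.normSq (P k j) : ℝ) : Quaternion ℝ) := by
    conv_lhs => rw [← hPP]
    rw [Matrix.mul_apply, qcoe_sum]
    apply Finset.sum_congr rfl
    intro j _
    have hjk : P j k = star (P k j) := by
      rw [← hPH, Matrix.conjTranspose_apply, hPH]
    rw [hjk, Quaternion.self_mul_star]
  have hxx : x = ∑ j : Fin M, Quaternion.normSq (P k j) :=
    Quaternion.coe_injective (hPkk.symm.trans h2)
  have hge : Quaternion.normSq (P k k) ≤ ∑ j : Fin M, Quaternion.normSq (P k j) :=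
    Finset.single_le_sum (f := fun j => Quaternion.normSq (P k j)) (fun j _ => Quaternion.normSq_nonneg) (Finset.mem_univ k)
  rw [hPkk, Quaternion.normSq_coe] at hge
  have hx0 : 0 ≤ x := Finset.sum_nonneg fun i _ => Quaternion.normSq_nonneg
  nlinarith [hxx ▸ hge]

lemma cs_sqrt {ι : Type*} (s : Finset ι) (f g : ι → ℝ) (hf : ∀ i ∈ s, 0 ≤ f i)
    (hg : ∀ i ∈ s, 0 ≤ g i) :
    ∑ i ∈ s, f i * g i ≤ Real.sqrt (∑ i ∈ s, f i ^ 2) * Real.sqrt (∑ i ∈ s, g i ^ 2) := by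
  have h := Finset.sum_mul_sq_le_sq_mul_sq s f g
  have h0 : 0 ≤ ∑ i ∈ s, f i * g i :=
    Finset.sum_nonneg fun i hi => mul_nonneg (hf i hi) (hg i hi)
  have := Real.sqrt_le_sqrt h
  rwa [Real.sqrt_sq h0, Real.sqrt_mul (Finset.sum_nonneg fun i _ => sq_nonneg _)] at this


lemma trace_expand {M N r : ℕ} (σ : ℕ → ℝ)
    (A : Matrix (Fin r) (Fin M) (Quaternion ℝ)) (B : Matrix (Fin r) (Fin N) (Quaternion ℝ)) :
    Matrix.trace (A * (Matrix.of fun (i : Fin M) (j : Fin N) =>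
        if (i : ℕ) = (j : ℕ) then ((σ (i : ℕ) : ℝ) : Quaternion ℝ) else 0) * Bᴴ)
    = ∑ t : Fin (min M N), ((σ (t : ℕ) : ℝ) : Quaternion ℝ) *
        ∑ i : Fin r, A i (Fin.castLE (min_le_left M N) t) * star (B i (Fin.castLE (min_le_right M N) t)) := by
  rw [Matrix.trace]
  have h1 : ∀ i : Fin r, (A * (Matrix.of fun (k : Fin M) (l : Fin N) =>
      if (k : ℕ) = (l : ℕ) then ((σ (k : ℕ) : ℝ) : Quaternion ℝ) else 0) * Bᴴ).diag i
      = ∑ l : Fin N, ∑ k : Fin M,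
          (if (k : ℕ) = (l : ℕ) then A i k * ((σ (k : ℕ) : ℝ) : Quaternion ℝ) * star (B i l) else 0) := by
    intro i
    rw [Matrix.diag_apply, Matrix.mul_apply]
    apply Finset.sum_congr rfl
    intro l _
    rw [Matrix.mul_apply, Matrix.conjTranspose_apply, Finset.sum_mul]
    apply Finset.sum_congr rfl
    intro k _
    by_cases h : (k : ℕ) = (l : ℕ) <;> simp [h]
  simp only [h1]
  rw [Finset.sum_comm]
  have h2 : ∀ l : Fin N, ∑ i : Fin r, ∑ k : Fin M,
      (if (k : ℕ) = (l : ℕ) then A i k * ((σ (k : ℕ) : ℝ) : Quaternion ℝ) * star (B i l) else 0)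
      = ∑ k : Fin M, (if (k : ℕ) = (l : ℕ) then
          ∑ i : Fin r, A i k * ((σ (k : ℕ) : ℝ) : Quaternion ℝ) * star (B i l) else 0) := by
    intro l
    rw [Finset.sum_comm]
    apply Finset.sum_congr rfl
    intro k _
    by_cases h : (k : ℕ) = (l : ℕ) <;> simp [h]
  simp only [h2]
  rw [Finset.sum_comm]
  rw [diag_pair_sum (fun k l => ∑ i : Fin r, A i k * ((σ (k : ℕ) : ℝ) : Quaternion ℝ) * star (B i l))]
  apply Finset.sum_congr rfl
  intro t _
  rw [Finset.mul_sum]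
  apply Finset.sum_congr rfl
  intro i _
  simp only [Fin.coe_castLE]
  simp [Quaternion.mul_coe_eq_smul, Quaternion.coe_mul_eq_smul, smul_mul_assoc]


lemma trace_norm_bound {M N r : ℕ} (hr : r ≤ min M N) (σ : ℕ → ℝ)
    (hσ0 : ∀ i, 0 ≤ σ i) (hσa : ∀ i j : ℕ, i ≤ j → σ j ≤ σ i)
    (A : Matrix (Fin r) (Fin M) (Quaternion ℝ)) (B : Matrix (Fin r) (Fin N) (Quaternion ℝ))
    (hA : A * Aᴴ = 1) (hB : B * Bᴴ = 1) :
    ‖Matrix.trace (A * (Matrix.of fun (i : Fin M) (j : Fin N) =>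
        if (i : ℕ) = (j : ℕ) then ((σ (i : ℕ) : ℝ) : Quaternion ℝ) else 0) * Bᴴ)‖
      ≤ ∑ t ∈ range r, σ t := by
  rw [trace_expand]
  set q : Fin (min M N) → Quaternion ℝ := fun t =>
    ∑ i : Fin r, A i (Fin.castLE (min_le_left M N) t) * star (B i (Fin.castLE (min_le_right M N) t))
    with hq
  set α : Fin (min M N) → ℝ := fun t =>
    Real.sqrt (∑ i : Fin r, Quaternion.normSq (A i (Fin.castLE (min_le_left M N) t))) with hα
  set β : Fin (min M N) → ℝ := fun t =>
    Real.sqrt (∑ i : Fin r, Quaternion.normSq (B i (Fin.castLE (min_le_right M N) t))) with hβ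
  have hq_le : ∀ t, ‖q t‖ ≤ α t * β t := by
    intro t
    calc ‖q t‖ ≤ ∑ i : Fin r, ‖A i (Fin.castLE (min_le_left M N) t) *
          star (B i (Fin.castLE (min_le_right M N) t))‖ := norm_sum_le _ _
      _ = ∑ i : Fin r, ‖A i (Fin.castLE (min_le_left M N) t)‖ *
          ‖B i (Fin.castLE (min_le_right M N) t)‖ := by
          apply Finset.sum_congr rfl; intro i _
          rw [norm_mul, Quaternion.norm_star]
      _ ≤ Real.sqrt (∑ i : Fin r, ‖A i (Fin.castLE (min_le_left M N) t)‖ ^ 2) *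
          Real.sqrt (∑ i : Fin r, ‖B i (Fin.castLE (min_le_right M N) t)‖ ^ 2) :=
          cs_sqrt _ _ _ (fun i _ => norm_nonneg _) (fun i _ => norm_nonneg _)
      _ = α t * β t := by
          rw [hα, hβ]
          congr 1 <;> · congr 1; apply Finset.sum_congr rfl; intro i _
                        rw [Quaternion.normSq_eq_norm_mul_self, sq]
  have hα0 : ∀ t, 0 ≤ α t := fun t => Real.sqrt_nonneg _
  have hβ0 : ∀ t, 0 ≤ β t := fun t => Real.sqrt_nonneg _
  have hα1 : ∀ t, α t ≤ 1 := fun t =>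
    Real.sqrt_le_one.mpr (col_normSq_le_one A hA _)
  have hβ1 : ∀ t, β t ≤ 1 := fun t =>
    Real.sqrt_le_one.mpr (col_normSq_le_one B hB _)
  have hcol_sum : ∀ (P : ℕ) (C : Matrix (Fin r) (Fin P) (Quaternion ℝ)) (hC : C * Cᴴ = 1)
      (e : Fin (min M N) → Fin P) (he : Function.Injective e),
      ∑ t : Fin (min M N), ∑ i : Fin r, Quaternion.normSq (C i (e t)) ≤ (r : ℝ) := by
    intro P C hC e he
    have h1 : ∑ t : Fin (min M N), ∑ i : Fin r, Quaternion.normSq (C i (e t))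
        = ∑ k ∈ Finset.univ.image e, ∑ i : Fin r, Quaternion.normSq (C i k) :=
      (Finset.sum_image (g := e) (f := fun k => ∑ i : Fin r, Quaternion.normSq (C i k)) (fun x _ y _ h => he h)).symm
    rw [h1]
    have h2 : ∑ k ∈ Finset.univ.image e, ∑ i : Fin r, Quaternion.normSq (C i k)
        ≤ ∑ k : Fin P, ∑ i : Fin r, Quaternion.normSq (C i k) :=
      Finset.sum_le_sum_of_subset_of_nonneg (Finset.subset_univ _)
        (fun k _ _ => Finset.sum_nonneg fun i _ => Quaternion.normSq_nonneg)
    have h3 : ∑ k : Fin P, ∑ i : Fin r, Quaternion.normSq (C i k) = (r : ℝ) := by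
      rw [Finset.sum_comm]
      simp [row_normSq_sum C hC]
    linarith
  have hsum_ab : ∑ t : Fin (min M N), α t * β t ≤ (r : ℝ) := by
    have h := cs_sqrt Finset.univ α β (fun t _ => hα0 t) (fun t _ => hβ0 t)
    have hα2 : ∑ t : Fin (min M N), α t ^ 2
        = ∑ t : Fin (min M N), ∑ i : Fin r, Quaternion.normSq (A i (Fin.castLE (min_le_left M N) t)) := by
      apply Finset.sum_congr rfl; intro t _
      rw [hα, Real.sq_sqrt (Finset.sum_nonneg fun i _ => Quaternion.normSq_nonneg)]
    have hβ2 : ∑ t : Fin (min M N), β t ^ 2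
        = ∑ t : Fin (min M N), ∑ i : Fin r, Quaternion.normSq (B i (Fin.castLE (min_le_right M N) t)) := by
      apply Finset.sum_congr rfl; intro t _
      rw [hβ, Real.sq_sqrt (Finset.sum_nonneg fun i _ => Quaternion.normSq_nonneg)]
    have hA2 := hcol_sum M A hA (Fin.castLE (min_le_left M N)) (Fin.castLE_injective _)
    have hB2 := hcol_sum N B hB (Fin.castLE (min_le_right M N)) (Fin.castLE_injective _)
    have h4 : Real.sqrt (∑ t : Fin (min M N), α t ^ 2) ≤ Real.sqrt r :=
      Real.sqrt_le_sqrt (by rw [hα2]; exact hA2)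
    have h5 : Real.sqrt (∑ t : Fin (min M N), β t ^ 2) ≤ Real.sqrt r :=
      Real.sqrt_le_sqrt (by rw [hβ2]; exact hB2)
    have h6 : Real.sqrt (∑ t : Fin (min M N), α t ^ 2) *
        Real.sqrt (∑ t : Fin (min M N), β t ^ 2) ≤ Real.sqrt r * Real.sqrt r :=
      mul_le_mul h4 h5 (Real.sqrt_nonneg _) (Real.sqrt_nonneg _)
    rw [Real.mul_self_sqrt (Nat.cast_nonneg r)] at h6
    linarith
  -- set up c : ℕ → ℝ
  set c : ℕ → ℝ := fun n => if h : n < min M N then ‖q ⟨n, h⟩‖ else 0 with hc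
  have hc0 : ∀ n, 0 ≤ c n := by
    intro n; rw [hc]; dsimp only; split <;> [exact norm_nonneg _; exact le_refl 0]
  have hc1 : ∀ n, c n ≤ 1 := by
    intro n; rw [hc]; dsimp only; split
    next h =>
      calc ‖q ⟨n, h⟩‖ ≤ α ⟨n, h⟩ * β ⟨n, h⟩ := hq_le _
          _ ≤ 1 * 1 := mul_le_mul (hα1 _) (hβ1 _) (hβ0 _) zero_le_one
          _ = 1 := one_mul _
    next => exact zero_le_one
  have hcs : ∑ n ∈ range (min M N), c n ≤ (r : ℝ) := by
    rw [Finset.sum_range (fun n => c n)]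
    have : ∀ t : Fin (min M N), c (t : ℕ) = ‖q t‖ := by
      intro t; rw [hc]; dsimp only; rw [dif_pos t.isLt]
    calc ∑ t : Fin (min M N), c (t : ℕ) = ∑ t : Fin (min M N), ‖q t‖ :=
          Finset.sum_congr rfl fun t _ => this t
      _ ≤ ∑ t : Fin (min M N), α t * β t := Finset.sum_le_sum fun t _ => hq_le t
      _ ≤ (r : ℝ) := hsum_ab
  calc ‖∑ t : Fin (min M N), ((σ (t : ℕ) : ℝ) : Quaternion ℝ) * q t‖
      ≤ ∑ t : Fin (min M N), ‖((σ (t : ℕ) : ℝ) : Quaternion ℝ) * q t‖ := norm_sum_le _ _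
    _ = ∑ t : Fin (min M N), σ (t : ℕ) * ‖q t‖ := by
        apply Finset.sum_congr rfl; intro t _
        rw [norm_mul, Quaternion.norm_coe, Real.norm_eq_abs, abs_of_nonneg (hσ0 _)]
    _ = ∑ n ∈ range (min M N), σ n * c n := by
        rw [Finset.sum_range (fun n => σ n * c n)]
        apply Finset.sum_congr rfl; intro t _
        congr 1
        rw [hc]; dsimp only; rw [dif_pos t.isLt]
    _ ≤ ∑ t ∈ range r, σ t := qsum_lemma hr σ c hσ0 hσa hc0 hc1 hcs


theorem quat_truncated_nuclear_norm_eq {M N r : ℕ} (hr : r ≤ min M N)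
    (X : Matrix (Fin M) (Fin N) (Quaternion ℝ))
    (U : Matrix (Fin M) (Fin M) (Quaternion ℝ))
    (V : Matrix (Fin N) (Fin N) (Quaternion ℝ))
    (hU1 : U * Uᴴ = 1) (hU2 : Uᴴ * U = 1)
    (hV1 : V * Vᴴ = 1) (hV2 : Vᴴ * V = 1)
    (σ : ℕ → ℝ) (hσnonneg : ∀ i, 0 ≤ σ i)
    (hσanti : ∀ i j : ℕ, i ≤ j → σ j ≤ σ i)
    (hX : X = U * (Matrix.of fun (i : Fin M) (j : Fin N) =>
      if (i : ℕ) = (j : ℕ) then ((σ (i : ℕ) : ℝ) : Quaternion ℝ) else 0) * Vᴴ) :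
    ∑ i ∈ Finset.Ico r (min M N), σ i =
      (∑ i ∈ Finset.range (min M N), σ i) -
        sSup {t : ℝ | ∃ (C : Matrix (Fin r) (Fin M) (Quaternion ℝ))
            (D : Matrix (Fin r) (Fin N) (Quaternion ℝ)),
            C * Cᴴ = 1 ∧ D * Dᴴ = 1 ∧ t = ‖Matrix.trace (C * X * Dᴴ)‖} := by
  set Sig : Matrix (Fin M) (Fin N) (Quaternion ℝ) := Matrix.of fun (i : Fin M) (j : Fin N) =>
      if (i : ℕ) = (j : ℕ) then ((σ (i : ℕ) : ℝ) : Quaternion ℝ) else 0 with hSig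
  set S : Set ℝ := {t : ℝ | ∃ (C : Matrix (Fin r) (Fin M) (Quaternion ℝ))
      (D : Matrix (Fin r) (Fin N) (Quaternion ℝ)),
      C * Cᴴ = 1 ∧ D * Dᴴ = 1 ∧ t = ‖Matrix.trace (C * X * Dᴴ)‖} with hS
  have hrM : r ≤ M := hr.trans (min_le_left M N)
  have hrN : r ≤ N := hr.trans (min_le_right M N)
  set s₀ : ℝ := ∑ t ∈ range r, σ t with hs₀
  -- upper bound
  have hub : ∀ x ∈ S, x ≤ s₀ := by
    rintro x ⟨C, D, hC, hD, rfl⟩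
    have hrw : C * X * Dᴴ = (C * U) * Sig * (D * V)ᴴ := by
      rw [hX, Matrix.conjTranspose_mul]
      simp only [Matrix.mul_assoc]
    rw [hrw]
    have hA : (C * U) * (C * U)ᴴ = 1 := by
      rw [Matrix.conjTranspose_mul, Matrix.mul_assoc, ← Matrix.mul_assoc U, hU1, Matrix.one_mul, hC]
    have hB : (D * V) * (D * V)ᴴ = 1 := by
      rw [Matrix.conjTranspose_mul, Matrix.mul_assoc, ← Matrix.mul_assoc V, hV1, Matrix.one_mul, hD]
    exact trace_norm_bound hr σ hσnonneg hσanti (C * U) (D * V) hA hB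
  -- membership
  have hmem : s₀ ∈ S := by
    set f : Fin r → Fin M := Fin.castLE hrM with hf
    set g : Fin r → Fin N := Fin.castLE hrN with hg
    refine ⟨Uᴴ.submatrix f id, Vᴴ.submatrix g id, ?_, ?_, ?_⟩
    · have h1 : (Uᴴ.submatrix f id)ᴴ = U.submatrix id f := by
        rw [Matrix.conjTranspose_submatrix, Matrix.conjTranspose_conjTranspose]
      rw [h1]
      have h2 := Matrix.submatrix_mul_equiv Uᴴ U f (Equiv.refl (Fin M)) f
      simp only [Equiv.coe_refl] at h2
      rw [h2, hU2, Matrix.submatrix_one f (Fin.castLE_injective _)]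
    · have h1 : (Vᴴ.submatrix g id)ᴴ = V.submatrix id g := by
        rw [Matrix.conjTranspose_submatrix, Matrix.conjTranspose_conjTranspose]
      rw [h1]
      have h2 := Matrix.submatrix_mul_equiv Vᴴ V g (Equiv.refl (Fin N)) g
      simp only [Equiv.coe_refl] at h2
      rw [h2, hV2, Matrix.submatrix_one g (Fin.castLE_injective _)]
    · have h1 : (Vᴴ.submatrix g id)ᴴ = V.submatrix id g := by
        rw [Matrix.conjTranspose_submatrix, Matrix.conjTranspose_conjTranspose]
      have key : Uᴴ.submatrix f id * X * (Vᴴ.submatrix g id)ᴴ = Sig.submatrix f g := by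
        rw [h1, hX]
        have e1 : Uᴴ.submatrix f id * (U * Sig * Vᴴ) = (Uᴴ * (U * Sig * Vᴴ)).submatrix f id := by
          have := Matrix.submatrix_mul_equiv Uᴴ (U * Sig * Vᴴ) f (Equiv.refl (Fin M)) (id : Fin N → Fin N)
          simp only [Equiv.coe_refl, Matrix.submatrix_id_id] at this
          rw [← this]
        have e2 : Uᴴ * (U * Sig * Vᴴ) = Sig * Vᴴ := by
          rw [← Matrix.mul_assoc, ← Matrix.mul_assoc, hU2, Matrix.one_mul]
        rw [e1, e2]
        have e3 : (Sig * Vᴴ).submatrix f id * V.submatrix id g = ((Sig * Vᴴ) * V).submatrix f g := by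
          have := Matrix.submatrix_mul_equiv (Sig * Vᴴ) V f (Equiv.refl (Fin N)) g
          simp only [Equiv.coe_refl] at this
          rw [← this]
        rw [e3, Matrix.mul_assoc, hV2, Matrix.mul_one]
      rw [key]
      have htr : Matrix.trace (Sig.submatrix f g) = ((s₀ : ℝ) : Quaternion ℝ) := by
        rw [Matrix.trace, hs₀, qcoe_sum]
        rw [Finset.sum_range (fun n => ((σ n : ℝ) : Quaternion ℝ))]
        apply Finset.sum_congr rfl
        intro i _
        rw [Matrix.diag_apply, Matrix.submatrix_apply, hSig]
        simp [hf, hg]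
      rw [htr, Quaternion.norm_coe, Real.norm_eq_abs,
        abs_of_nonneg (Finset.sum_nonneg fun t _ => hσnonneg t)]
  have hbdd : BddAbove S := ⟨s₀, hub⟩
  have hsup : sSup S = s₀ := le_antisymm (csSup_le ⟨s₀, hmem⟩ hub) (le_csSup hbdd hmem)
  rw [hsup, Finset.sum_Ico_eq_sub σ hr]
end
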